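/- The function b = σ·z is odd (b(−x) = −b(x) for all x ∈ ℝ) and limit periodic; in fact, the functions ψ_n(x) := φ_n(x) z(x), where φ_n is the 2·3^n-periodic extension of σ restricted to (−3^n, 3^n], are continuous, periodic with period 2·3^n, and converge uniformly to b on ℝ. -/

import Mathlib

open Filter Topology

noncomputable section

/-- The defining properties of the function `σ` of Section 3 of the paper:
`σ = −1` on `(−1,0]`, `σ = 1` on `(0,1]`, and for every `n ≥ 0`,
`σ(x) = σ(x + 2·3^n) − 1/(n+1)²` on `(−3^{n+1}, −3^n]` and
`σ(x) = σ(x − 2·3^n) + 1/(n+1)²` on `(3^n, 3^{n+1}]`.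
These conditions determine `σ` uniquely on all of `ℝ`. -/
def SigmaSpec (σ : ℝ → ℝ) : Prop :=
  (∀ x : ℝ, -1 < x → x ≤ 0 → σ x = -1) ∧
  (∀ x : ℝ, 0 < x → x ≤ 1 → σ x = 1) ∧
  (∀ (n : ℕ) (x : ℝ), -(3 : ℝ) ^ (n + 1) < x → x ≤ -(3 : ℝ) ^ n →
    σ x = σ (x + 2 * 3 ^ n) - 1 / ((n : ℝ) + 1) ^ 2) ∧
  (∀ (n : ℕ) (x : ℝ), (3 : ℝ) ^ n < x → x ≤ (3 : ℝ) ^ (n + 1) →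
    σ x = σ (x - 2 * 3 ^ n) + 1 / ((n : ℝ) + 1) ^ 2)
/-- The continuous `1`-periodic function with `z(x) = 2|x|` on `[−1/2, 1/2]`
(twice the distance to the nearest integer). -/
def zfun (x : ℝ) : ℝ := 2 * |x - (round x : ℤ)|

/-- The `2·3^n`-periodic extension of `σ` restricted to `(−3^n, 3^n]`. -/
def phiExt (σ : ℝ → ℝ) (n : ℕ) (x : ℝ) : ℝ :=
  σ (x - 2 * 3 ^ n * (⌈(x - 3 ^ n) / (2 * 3 ^ n)⌉ : ℤ))

/-- `φ` is limit periodic: it is continuous and is the uniform limit on `ℝ` of a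
sequence of continuous periodic functions. -/
def LimitPeriodic (φ : ℝ → ℝ) : Prop :=
  Continuous φ ∧ ∃ ψ : ℕ → ℝ → ℝ,
    (∀ n, Continuous (ψ n) ∧ ∃ T : ℝ, 0 < T ∧ Function.Periodic (ψ n) T) ∧
    TendstoUniformly ψ φ atTop

/- ### zfun lemmas -/

lemma zfun_nonneg (x : ℝ) : 0 ≤ zfun x := by unfold zfun; positivity

lemma zfun_le_one (x : ℝ) : zfun x ≤ 1 := by
  have := abs_sub_round x
  unfold zfun; linarith

lemma zfun_int (m : ℤ) : zfun (m : ℝ) = 0 := by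
  simp [zfun]

lemma zfun_neg (x : ℝ) : zfun (-x) = zfun x := by
  unfold zfun
  have h1 := round_le x (-round (-x))
  have h2 := round_le (-x) (-round x)
  have e1 : |x - ((-round (-x) : ℤ) : ℝ)| = |-x - (round (-x) : ℤ)| := by
    rw [← abs_neg]; push_cast; ring_nf
  have e2 : |-x - ((-round x : ℤ) : ℝ)| = |x - (round x : ℤ)| := by
    rw [← abs_neg]; push_cast; ring_nf
  rw [e1] at h1; rw [e2] at h2
  linarith

lemma zfun_lipschitz : LipschitzWith 2 zfun := by
  apply LipschitzWith.of_dist_le_mul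
  intro x y
  rw [Real.dist_eq, Real.dist_eq]
  have key : ∀ a b : ℝ, zfun a - zfun b ≤ 2 * |a - b| := by
    intro a b
    have h1 := round_le a (round b)
    have h2 : |a - (round b : ℤ)| ≤ |a - b| + |b - (round b : ℤ)| := by
      have := abs_sub_abs_le_abs_sub (a - (round b : ℤ)) (b - (round b : ℤ))
      calc |a - (round b : ℤ)| ≤ |b - (round b : ℤ)| + |a - b| := by
            have : a - (round b : ℤ) = (b - (round b : ℤ)) + (a - b) := by ring
            rw [this]; exact abs_add_le _ _
        _ = |a - b| + |b - (round b : ℤ)| := by ring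
    unfold zfun
    nlinarith [abs_nonneg (a - b)]
  have k1 := key x y
  have k2 := key y x
  rw [abs_sub_comm y x] at k2
  push_cast [NNReal.coe_two]
  rw [abs_sub_le_iff]
  constructor <;> linarith

lemma zfun_continuous : Continuous zfun := zfun_lipschitz.continuous

lemma zfun_add_int (x : ℝ) (m : ℤ) : zfun (x + m) = zfun x := by
  unfold zfun
  rw [round_add_intCast]
  push_cast
  ring_nf

/- ### σ lemmas -/

lemma exists_pow_bound (x : ℝ) : ∃ N : ℕ, -(3:ℝ)^N < x ∧ x ≤ (3:ℝ)^N := by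
  obtain ⟨N, hN⟩ := pow_unbounded_of_one_lt |x| (by norm_num : (1:ℝ) < 3)
  refine ⟨N, ?_, ?_⟩
  · have := neg_abs_le x; linarith
  · have := le_abs_self x; linarith

section SigmaLemmas

variable {σ : ℝ → ℝ} (hσ : SigmaSpec σ)
include hσ

lemma sigma_eq_ceil_aux (N : ℕ) : ∀ x : ℝ, -(3:ℝ)^N < x → x ≤ (3:ℝ)^N →
    σ x = σ ((⌈x⌉ : ℤ) : ℝ) := by
  obtain ⟨h1, h2, h3, h4⟩ := hσ
  induction N with
  | zero =>
    intro x hl hr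
    simp only [pow_zero] at hl hr
    rcases le_or_gt x 0 with hx | hx
    · have hc : ⌈x⌉ = 0 := by
        rw [Int.ceil_eq_iff]
        constructor <;> push_cast <;> linarith
      rw [hc, h1 x hl hx]
      push_cast
      rw [h1 0 (by norm_num) le_rfl]
    · have hc : ⌈x⌉ = 1 := by
        rw [Int.ceil_eq_iff]
        constructor <;> push_cast <;> linarith
      rw [hc, h2 x hx hr]
      push_cast
      rw [h2 1 (by norm_num) le_rfl]
  | succ N ih =>
    intro x hl hr
    have h3pos : (0:ℝ) < (3:ℝ)^N := by positivity
    rcases le_or_gt x (-(3:ℝ)^N) with hx1 | hx1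
    · -- left band
      have hy : σ x = σ (x + 2 * 3 ^ N) - 1 / ((N : ℝ) + 1) ^ 2 := h3 N x hl hx1
      have hylo : -(3:ℝ)^N < x + 2 * 3 ^ N := by
        have : -(3:ℝ)^(N+1) = -(3:ℝ)^N - 2 * 3^N := by ring
        linarith [this ▸ hl]
      have hyhi : x + 2 * 3 ^ N ≤ (3:ℝ)^N := by linarith
      have ihy := ih (x + 2 * 3 ^ N) hylo hyhi
      have hce : ⌈x + 2 * (3:ℝ) ^ N⌉ = ⌈x⌉ + 2 * 3 ^ N := by
        have : x + 2 * (3:ℝ) ^ N = x + ((2 * 3^N : ℤ) : ℝ) := by push_cast; ring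
        rw [this, Int.ceil_add_intCast]
      -- apply h3 at the integer point
      have hcl : -(3:ℝ)^(N+1) < ((⌈x⌉ : ℤ) : ℝ) := lt_of_lt_of_le hl (Int.le_ceil x)
      have hch : ((⌈x⌉ : ℤ) : ℝ) ≤ -(3:ℝ)^N := by
        have : -(3:ℝ)^N = ((-(3^N) : ℤ) : ℝ) := by push_cast; ring
        rw [this] at hx1 ⊢
        exact_mod_cast Int.ceil_le.mpr hx1
      have hz := h3 N ((⌈x⌉ : ℤ) : ℝ) hcl hch
      rw [hy, ihy, hce, hz]
      push_cast
      ring_nf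
    · rcases le_or_gt x ((3:ℝ)^N) with hx2 | hx2
      · exact ih x hx1 hx2
      · -- right band
        have hy : σ x = σ (x - 2 * 3 ^ N) + 1 / ((N : ℝ) + 1) ^ 2 := h4 N x hx2 hr
        have hylo : -(3:ℝ)^N < x - 2 * 3 ^ N := by linarith
        have hyhi : x - 2 * 3 ^ N ≤ (3:ℝ)^N := by
          have : (3:ℝ)^(N+1) = 3^N + 2 * 3^N := by ring
          linarith [this ▸ hr]
        have ihy := ih (x - 2 * 3 ^ N) hylo hyhi
        have hce : ⌈x - 2 * (3:ℝ) ^ N⌉ = ⌈x⌉ - 2 * 3 ^ N := by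
          have : x - 2 * (3:ℝ) ^ N = x - ((2 * 3^N : ℤ) : ℝ) := by push_cast; ring
          rw [this, Int.ceil_sub_intCast]
        have hcl : (3:ℝ)^N < ((⌈x⌉ : ℤ) : ℝ) := lt_of_lt_of_le hx2 (Int.le_ceil x)
        have hch : ((⌈x⌉ : ℤ) : ℝ) ≤ (3:ℝ)^(N+1) := by
          have h' : (3:ℝ)^(N+1) = (((3^(N+1) : ℤ)) : ℝ) := by push_cast; ring
          rw [h'] at hr ⊢
          exact_mod_cast Int.ceil_le.mpr hr
        have hz := h4 N ((⌈x⌉ : ℤ) : ℝ) hcl hch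
        rw [hy, ihy, hce, hz]
        push_cast
        ring_nf

lemma sigma_eq_ceil (x : ℝ) : σ x = σ ((⌈x⌉ : ℤ) : ℝ) := by
  obtain ⟨N, hl, hr⟩ := exists_pow_bound x
  exact sigma_eq_ceil_aux hσ N x hl hr

lemma sigma_bound (N : ℕ) : ∀ x : ℝ, -(3:ℝ)^N < x → x ≤ (3:ℝ)^N →
    |σ x| ≤ (N : ℝ) + 1 := by
  obtain ⟨h1, h2, h3, h4⟩ := hσ
  induction N with
  | zero =>
    intro x hl hr
    simp only [pow_zero] at hl hr
    rcases le_or_gt x 0 with hx | hx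
    · rw [h1 x hl hx]; norm_num
    · rw [h2 x hx hr]; norm_num
  | succ N ih =>
    intro x hl hr
    have hsq : (1:ℝ) / ((N : ℝ) + 1) ^ 2 ≤ 1 := by
      rw [div_le_one (by positivity)]
      nlinarith [Nat.cast_nonneg (α := ℝ) N]
    have hsqpos : (0:ℝ) < 1 / ((N : ℝ) + 1) ^ 2 := by positivity
    rcases le_or_gt x (-(3:ℝ)^N) with hx1 | hx1
    · have hy := h3 N x hl hx1
      have hylo : -(3:ℝ)^N < x + 2 * 3 ^ N := by
        have h' : -(3:ℝ)^(N+1) = -(3:ℝ)^N - 2 * 3^N := by ring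
        linarith [h' ▸ hl]
      have hyhi : x + 2 * 3 ^ N ≤ (3:ℝ)^N := by linarith
      have := ih (x + 2 * 3 ^ N) hylo hyhi
      rw [hy]
      push_cast
      have hb := abs_le.mp this
      rw [abs_le]
      constructor <;> linarith
    · rcases le_or_gt x ((3:ℝ)^N) with hx2 | hx2
      · have := ih x hx1 hx2
        push_cast
        linarith
      · have hy := h4 N x hx2 hr
        have hylo : -(3:ℝ)^N < x - 2 * 3 ^ N := by linarith
        have hyhi : x - 2 * 3 ^ N ≤ (3:ℝ)^N := by
          have h' : (3:ℝ)^(N+1) = 3^N + 2 * 3^N := by ring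
          linarith [h' ▸ hr]
        have := ih (x - 2 * 3 ^ N) hylo hyhi
        rw [hy]
        push_cast
        have hb := abs_le.mp this
        rw [abs_le]
        constructor <;> linarith

lemma sigma_odd_aux (N : ℕ) : ∀ x : ℝ, -(3:ℝ)^N < x → x ≤ (3:ℝ)^N →
    (∀ m : ℤ, x ≠ (m : ℝ)) → σ (-x) = -σ x := by
  obtain ⟨h1, h2, h3, h4⟩ := hσ
  induction N with
  | zero =>
    intro x hl hr hni
    simp only [pow_zero] at hl hr
    rcases (hni 0).lt_or_gt with hx | hx
    · push_cast at hx
      rw [h1 x hl hx.le, h2 (-x) (by linarith) (by linarith)]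
      norm_num
    · push_cast at hx
      have hx1 : x < 1 := lt_of_le_of_ne hr (by simpa using hni 1)
      rw [h2 x hx hr, h1 (-x) (by linarith) (by linarith)]
  | succ N ih =>
    intro x hl hr hni
    rcases le_or_gt x (-(3:ℝ)^N) with hx1 | hx1
    · -- x in left band, strictly (since not integer)
      have hxne : x ≠ -(3:ℝ)^N := by
        intro h; exact hni (-(3^N)) (by rw [h]; push_cast; ring)
      have hx1' : x < -(3:ℝ)^N := lt_of_le_of_ne hx1 hxne
      have hy := h3 N x hl hx1
      have hylo : -(3:ℝ)^N < x + 2 * 3 ^ N := by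
        have h' : -(3:ℝ)^(N+1) = -(3:ℝ)^N - 2 * 3^N := by ring
        linarith [h' ▸ hl]
      have hyhi : x + 2 * 3 ^ N ≤ (3:ℝ)^N := by linarith
      have hyni : ∀ m : ℤ, x + 2 * (3:ℝ)^N ≠ (m : ℝ) := by
        intro m h
        exact hni (m - 2 * 3^N) (by push_cast; linarith)
      have ihy := ih (x + 2 * 3 ^ N) hylo hyhi hyni
      -- σ(-x) via h4 at -x : 3^N < -x ≤ 3^(N+1)
      have hz := h4 N (-x) (by linarith) (by linarith)
      have harg : -x - 2 * (3:ℝ)^N = -(x + 2 * 3^N) := by ring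
      rw [hz, harg, ihy, hy]
      ring
    · rcases le_or_gt x ((3:ℝ)^N) with hx2 | hx2
      · exact ih x hx1 hx2 hni
      · have hxne : x ≠ (3:ℝ)^(N+1) := by
          intro h; exact hni (3^(N+1)) (by rw [h]; push_cast; ring)
        have hr' : x < (3:ℝ)^(N+1) := lt_of_le_of_ne hr hxne
        have hy := h4 N x hx2 hr
        have hylo : -(3:ℝ)^N < x - 2 * 3 ^ N := by linarith
        have hyhi : x - 2 * 3 ^ N ≤ (3:ℝ)^N := by
          have h' : (3:ℝ)^(N+1) = 3^N + 2 * 3^N := by ring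
          linarith [h' ▸ hr]
        have hyni : ∀ m : ℤ, x - 2 * (3:ℝ)^N ≠ (m : ℝ) := by
          intro m h
          exact hni (m + 2 * 3^N) (by push_cast; linarith)
        have ihy := ih (x - 2 * 3 ^ N) hylo hyhi hyni
        have hz := h3 N (-x) (by linarith) (by linarith)
        have harg : -x + 2 * (3:ℝ)^N = -(x - 2 * 3^N) := by ring
        rw [hz, harg, ihy, hy]
        ring

end SigmaLemmas

/- ### phiExt lemmas -/

lemma shift_mem (n : ℕ) (x : ℝ) :
    -(3:ℝ)^n < x - 2 * 3 ^ n * (⌈(x - 3 ^ n) / (2 * 3 ^ n)⌉ : ℤ) ∧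
    x - 2 * 3 ^ n * (⌈(x - 3 ^ n) / (2 * 3 ^ n)⌉ : ℤ) ≤ (3:ℝ)^n := by
  set T : ℝ := 2 * 3 ^ n with hT
  have hTpos : (0:ℝ) < T := by positivity
  set k : ℤ := ⌈(x - 3 ^ n) / T⌉ with hk
  have h1 : (x - 3 ^ n) / T ≤ (k : ℝ) := Int.le_ceil _
  have h2 : (k : ℝ) < (x - 3 ^ n) / T + 1 := Int.ceil_lt_add_one _
  rw [div_le_iff₀ hTpos] at h1
  have h2' : ((k:ℝ) - 1) * T < x - 3 ^ n := by
    have hlt : (k:ℝ) - 1 < (x - 3 ^ n) / T := by linarith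
    calc ((k:ℝ)-1)*T < ((x - 3^n)/T)*T := by nlinarith
      _ = x - 3^n := by field_simp
  constructor
  · nlinarith
  · nlinarith

lemma phiExt_eq_self {n : ℕ} {x : ℝ} (hl : -(3:ℝ)^n < x) (hr : x ≤ (3:ℝ)^n) :
    phiExt σ n x = σ x := by
  have hTpos : (0:ℝ) < 2 * 3 ^ n := by positivity
  have hk : ⌈(x - (3:ℝ) ^ n) / (2 * 3 ^ n)⌉ = 0 := by
    rw [Int.ceil_eq_iff]
    constructor
    · push_cast
      rw [lt_div_iff₀ hTpos]
      nlinarith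
    · push_cast
      rw [div_le_iff₀ hTpos]
      nlinarith
  unfold phiExt
  rw [hk]
  norm_num

lemma phiExt_periodic (σ : ℝ → ℝ) (n : ℕ) :
    Function.Periodic (phiExt σ n) (2 * 3 ^ n) := by
  intro x
  have hTpos : (0:ℝ) < 2 * 3 ^ n := by positivity
  unfold phiExt
  have hk : ⌈(x + 2 * 3 ^ n - (3:ℝ) ^ n) / (2 * 3 ^ n)⌉
      = ⌈(x - (3:ℝ) ^ n) / (2 * 3 ^ n)⌉ + 1 := by
    rw [← Int.ceil_add_one]
    congr 1
    field_simp
    ring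
  rw [hk]
  congr 1
  push_cast
  ring

/- ### sum bound -/

lemma sum_inv_sq_le (n m : ℕ) (hn : 1 ≤ n) :
    (∑ k ∈ Finset.Ico n m, (1:ℝ) / ((k:ℝ) + 1) ^ 2) ≤ 1 / (n:ℝ) := by
  rcases le_or_gt m n with h | h
  · rw [Finset.Ico_eq_empty (by omega)]
    simp only [Finset.sum_empty]
    positivity
  have step : ∀ k ∈ Finset.Ico n m, (1:ℝ) / ((k:ℝ) + 1) ^ 2
      ≤ 1 / (k:ℝ) - 1 / ((k:ℝ) + 1) := by
    intro k hk
    have hk1 : 1 ≤ k := le_trans hn (Finset.mem_Ico.mp hk).1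
    have hkpos : (0:ℝ) < (k:ℝ) := by exact_mod_cast Nat.lt_of_lt_of_le Nat.zero_lt_one hk1
    rw [div_sub_div _ _ hkpos.ne' (by positivity), div_le_div_iff₀ (by positivity) (by positivity)]
    ring_nf
    nlinarith
  calc (∑ k ∈ Finset.Ico n m, (1:ℝ) / ((k:ℝ) + 1) ^ 2)
      ≤ ∑ k ∈ Finset.Ico n m, ((1:ℝ) / (k:ℝ) - 1 / ((k:ℝ) + 1)) :=
        Finset.sum_le_sum step
    _ = (1:ℝ) / (n:ℝ) - 1 / (m:ℝ) := by
        rw [Finset.sum_Ico_eq_sub _ h.le]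
        have tele : ∀ j : ℕ, (∑ k ∈ Finset.range j, ((1:ℝ) / (k:ℝ) - 1 / ((k:ℝ) + 1)))
            = 1 / (0:ℝ) - 1 / (j:ℝ) := by
          intro j
          have := Finset.sum_range_sub' (fun k : ℕ => (1:ℝ) / (k:ℝ)) j
          simpa using this
        rw [tele m, tele n]
        ring
    _ ≤ 1 / (n:ℝ) := by
        have : (0:ℝ) ≤ 1 / (m:ℝ) := by positivity
        linarith

section SigmaLemmas2

variable {σ : ℝ → ℝ} (hσ : SigmaSpec σ)
include hσ

lemma phiExt_sub_bound (n : ℕ) : ∀ m : ℕ, n ≤ m → ∀ x : ℝ, -(3:ℝ)^m < x → x ≤ (3:ℝ)^m →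
    |σ x - phiExt σ n x| ≤ ∑ k ∈ Finset.Ico n m, (1:ℝ) / ((k:ℝ) + 1) ^ 2 := by
  intro m
  induction m with
  | zero =>
    intro hm x hl hr
    interval_cases n
    rw [phiExt_eq_self hl hr]
    simp
  | succ m ih =>
    intro hm x hl hr
    obtain ⟨h1, h2, h3, h4⟩ := hσ
    rcases Nat.lt_or_ge m n with hmn | hmn
    · -- n = m + 1
      have : n = m + 1 := by omega
      subst this
      rw [phiExt_eq_self hl hr]
      simp
    have hterm : (0:ℝ) ≤ 1 / ((m:ℝ) + 1) ^ 2 := by positivity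
    have hsum : (∑ k ∈ Finset.Ico n m, (1:ℝ) / ((k:ℝ) + 1) ^ 2)
        + 1 / ((m:ℝ) + 1) ^ 2 = ∑ k ∈ Finset.Ico n (m+1), (1:ℝ) / ((k:ℝ) + 1) ^ 2 := by
      rw [Finset.sum_Ico_succ_top hmn]
    have hper : ∀ y : ℝ, phiExt σ n (y - 2 * 3 ^ m) = phiExt σ n y := by
      intro y
      have h2m : (2:ℝ) * 3 ^ m = ((3 ^ (m - n) : ℕ) : ℝ) * (2 * 3 ^ n) := by
        push_cast
        rw [← mul_assoc, mul_comm ((3:ℝ)^(m-n)) 2, mul_assoc]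
        rw [pow_sub_mul_pow (3:ℝ) hmn]
      rw [h2m]
      exact ((phiExt_periodic σ n).nat_mul (3 ^ (m - n))).sub_eq y
    rcases le_or_gt x (-(3:ℝ)^m) with hx1 | hx1
    · have hy := h3 m x hl hx1
      have hylo : -(3:ℝ)^m < x + 2 * 3 ^ m := by
        have h' : -(3:ℝ)^(m+1) = -(3:ℝ)^m - 2 * 3^m := by ring
        linarith [h' ▸ hl]
      have hyhi : x + 2 * 3 ^ m ≤ (3:ℝ)^m := by linarith
      have ihy := ih hmn (x + 2 * 3 ^ m) hylo hyhi
      have hpe : phiExt σ n x = phiExt σ n (x + 2 * 3 ^ m) := by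
        have := hper (x + 2 * 3 ^ m)
        rw [add_sub_cancel_right] at this
        exact this
      rw [hy, hpe, ← hsum]
      have : |σ (x + 2 * 3 ^ m) - 1 / ((m:ℝ) + 1) ^ 2 - phiExt σ n (x + 2 * 3 ^ m)|
          ≤ |σ (x + 2 * 3 ^ m) - phiExt σ n (x + 2 * 3 ^ m)| + 1 / ((m:ℝ) + 1) ^ 2 := by
        have := abs_sub_abs_le_abs_sub (σ (x + 2 * 3 ^ m)) (phiExt σ n (x + 2 * 3 ^ m))
        calc |σ (x + 2 * 3 ^ m) - 1 / ((m:ℝ) + 1) ^ 2 - phiExt σ n (x + 2 * 3 ^ m)|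
            ≤ |σ (x + 2 * 3 ^ m) - phiExt σ n (x + 2 * 3 ^ m)| + |(1:ℝ) / ((m:ℝ) + 1) ^ 2| := by
              have e : σ (x + 2 * 3 ^ m) - 1 / ((m:ℝ) + 1) ^ 2 - phiExt σ n (x + 2 * 3 ^ m)
                  = (σ (x + 2 * 3 ^ m) - phiExt σ n (x + 2 * 3 ^ m)) - 1 / ((m:ℝ) + 1) ^ 2 := by
                ring
              rw [e]
              exact abs_sub _ _
          _ = |σ (x + 2 * 3 ^ m) - phiExt σ n (x + 2 * 3 ^ m)| + 1 / ((m:ℝ) + 1) ^ 2 := by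
              rw [abs_of_nonneg hterm]
      linarith
    rcases le_or_gt x ((3:ℝ)^m) with hx2 | hx2
    · have := ih hmn x hx1 hx2
      refine le_trans this ?_
      rw [← hsum]
      linarith
    · have hy := h4 m x hx2 hr
      have hylo : -(3:ℝ)^m < x - 2 * 3 ^ m := by linarith
      have hyhi : x - 2 * 3 ^ m ≤ (3:ℝ)^m := by
        have h' : (3:ℝ)^(m+1) = 3^m + 2 * 3^m := by ring
        linarith [h' ▸ hr]
      have ihy := ih hmn (x - 2 * 3 ^ m) hylo hyhi
      have hpe : phiExt σ n x = phiExt σ n (x - 2 * 3 ^ m) := (hper x).symm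
      rw [hy, hpe, ← hsum]
      have : |σ (x - 2 * 3 ^ m) + 1 / ((m:ℝ) + 1) ^ 2 - phiExt σ n (x - 2 * 3 ^ m)|
          ≤ |σ (x - 2 * 3 ^ m) - phiExt σ n (x - 2 * 3 ^ m)| + 1 / ((m:ℝ) + 1) ^ 2 := by
        calc |σ (x - 2 * 3 ^ m) + 1 / ((m:ℝ) + 1) ^ 2 - phiExt σ n (x - 2 * 3 ^ m)|
            ≤ |σ (x - 2 * 3 ^ m) - phiExt σ n (x - 2 * 3 ^ m)| + |(1:ℝ) / ((m:ℝ) + 1) ^ 2| := by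
              have e : σ (x - 2 * 3 ^ m) + 1 / ((m:ℝ) + 1) ^ 2 - phiExt σ n (x - 2 * 3 ^ m)
                  = (σ (x - 2 * 3 ^ m) - phiExt σ n (x - 2 * 3 ^ m)) + 1 / ((m:ℝ) + 1) ^ 2 := by
                ring
              rw [e]
              exact abs_add_le _ _
          _ = |σ (x - 2 * 3 ^ m) - phiExt σ n (x - 2 * 3 ^ m)| + 1 / ((m:ℝ) + 1) ^ 2 := by
              rw [abs_of_nonneg hterm]
      linarith

lemma phiExt_sub_bound' (n : ℕ) (hn : 1 ≤ n) (x : ℝ) :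
    |σ x - phiExt σ n x| ≤ 1 / (n:ℝ) := by
  obtain ⟨M, hl, hr⟩ := exists_pow_bound x
  have hmono : (3:ℝ)^M ≤ (3:ℝ)^(max M n) :=
    pow_le_pow_right₀ (by norm_num) (le_max_left M n)
  have h1 := phiExt_sub_bound hσ n (max M n) (le_max_right M n) x
    (by linarith) (by linarith)
  exact le_trans h1 (sum_inv_sq_le n (max M n) hn)

end SigmaLemmas2

lemma psi_periodic (σ : ℝ → ℝ) (n : ℕ) :
    Function.Periodic (fun x => phiExt σ n x * zfun x) (2 * 3 ^ n) := by
  intro x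
  simp only
  rw [phiExt_periodic σ n x]
  congr 1
  have e : x + 2*(3:ℝ)^n = x + ((2*3^n : ℤ):ℝ) := by push_cast; ring
  rw [e, zfun_add_int]

section SigmaLemmas3

variable {σ : ℝ → ℝ} (hσ : SigmaSpec σ)
include hσ

lemma psi_continuous (n : ℕ) : Continuous (fun x => phiExt σ n x * zfun x) := by
  rw [continuous_iff_continuousAt]
  intro a
  by_cases ha : ∃ m : ℤ, a = (m : ℝ)
  · obtain ⟨m, rfl⟩ := ha
    have hz0 : zfun ((m:ℤ):ℝ) = 0 := zfun_int m
    unfold ContinuousAt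
    simp only [hz0, mul_zero]
    refine squeeze_zero_norm (a := fun x => ((n:ℝ)+1) * zfun x) ?_ ?_
    · intro x
      have hb : |phiExt σ n x| ≤ (n:ℝ)+1 := by
        obtain ⟨hl, hr⟩ := shift_mem n x
        exact sigma_bound hσ n _ hl hr
      have hz := zfun_nonneg x
      rw [Real.norm_eq_abs, abs_mul, abs_of_nonneg hz]
      exact mul_le_mul_of_nonneg_right hb hz
    · have ht : Filter.Tendsto (fun x => ((n:ℝ)+1) * zfun x) (nhds ((m:ℤ):ℝ))
          (nhds (((n:ℝ)+1) * zfun ((m:ℤ):ℝ))) :=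
        ((continuous_const.mul zfun_continuous).tendsto _)
      rw [hz0, mul_zero] at ht
      exact ht
  · push_neg at ha
    set c : ℤ := ⌈a⌉ with hc
    have hac : a < (c:ℝ) := lt_of_le_of_ne (Int.le_ceil a) (ha c)
    have hac1 : (c:ℝ) - 1 < a := by
      have := Int.ceil_lt_add_one a
      push_cast at this ⊢
      linarith
    have hTpos : (0:ℝ) < 2 * 3^n := by positivity
    have hIno : ∀ j : ℤ, ¬ ((c:ℝ) - 1 < (j:ℝ) ∧ (j:ℝ) < (c:ℝ)) := by
      rintro j ⟨h1, h2⟩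
      have hj1 : c - 1 < j := by
        exact_mod_cast (show ((c - 1 : ℤ):ℝ) < (j:ℝ) by push_cast; linarith)
      have hj2 : j < c := by exact_mod_cast h2
      omega
    have hkle : ∀ x y : ℝ, (c:ℝ) - 1 < x → x < c → (c:ℝ) - 1 < y → y < c →
        ⌈(x - (3:ℝ)^n) / (2 * 3^n)⌉ ≤ ⌈(y - (3:ℝ)^n) / (2 * 3^n)⌉ := by
      intro x y hx1 hx2 hy1 hy2
      by_contra hcon
      push_neg at hcon
      set kx := ⌈(x - (3:ℝ)^n) / (2 * 3^n)⌉ with hkx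
      set ky := ⌈(y - (3:ℝ)^n) / (2 * 3^n)⌉ with hky
      have h1 : y - 3^n ≤ (ky:ℝ) * (2 * 3^n) :=
        (div_le_iff₀ hTpos).mp (Int.le_ceil _)
      have h2 : ((kx:ℝ) - 1) * (2 * 3^n) < x - 3^n := by
        have hlt : (kx:ℝ) - 1 < (x - (3:ℝ)^n) / (2 * 3^n) := by
          have := Int.ceil_lt_add_one ((x - (3:ℝ)^n) / (2 * 3^n))
          linarith
        calc ((kx:ℝ)-1) * (2*3^n) < ((x - (3:ℝ)^n) / (2 * 3^n)) * (2*3^n) := by nlinarith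
          _ = x - 3^n := by field_simp
      have hkyx : (ky:ℝ) ≤ (kx:ℝ) - 1 := by
        have h : ky ≤ kx - 1 := by omega
        exact_mod_cast h
      refine hIno (3^n + 2*3^n*ky) ⟨?_, ?_⟩
      · push_cast
        nlinarith
      · push_cast
        nlinarith
    have hconst : ∀ x : ℝ, (c:ℝ) - 1 < x → x < c → phiExt σ n x = phiExt σ n a := by
      intro x hx1 hx2
      have hk : ⌈(x - (3:ℝ)^n) / (2 * 3^n)⌉ = ⌈(a - (3:ℝ)^n) / (2 * 3^n)⌉ :=
        le_antisymm (hkle x a hx1 hx2 hac1 hac) (hkle a x hac1 hac hx1 hx2)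
      set k := ⌈(a - (3:ℝ)^n) / (2 * 3^n)⌉ with hkdef
      have hcx : ⌈x⌉ = c := by
        have h1 : ⌈x⌉ ≤ c := Int.ceil_le.mpr (le_of_lt hx2)
        have h2 : c - 1 < ⌈x⌉ := Int.lt_ceil.mpr (by push_cast; linarith)
        omega
      have key : ∀ y : ℝ, ⌈y⌉ = c →
          σ (y - 2 * 3^n * (k:ℝ)) = σ (((c - 2*3^n*k : ℤ)) : ℝ) := by
        intro y hy
        have hceil : ⌈y - 2*(3:ℝ)^n*(k:ℝ)⌉ = c - 2*3^n*k := by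
          have e : y - 2*(3:ℝ)^n*(k:ℝ) = y - ((2*3^n*k : ℤ):ℝ) := by push_cast; ring
          rw [e, Int.ceil_sub_intCast, hy]
        rw [sigma_eq_ceil hσ (y - 2*(3:ℝ)^n*(k:ℝ)), hceil]
      unfold phiExt
      rw [hk]
      rw [key x hcx, key a rfl]
    have hopen : Set.Ioo ((c:ℝ)-1) (c:ℝ) ∈ nhds a := Ioo_mem_nhds hac1 hac
    have heq : (fun x => phiExt σ n a * zfun x) =ᶠ[nhds a]
        (fun x => phiExt σ n x * zfun x) := by
      filter_upwards [hopen] with x hx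
      rw [hconst x hx.1 hx.2]
    exact ContinuousAt.congr ((continuous_const.mul zfun_continuous).continuousAt) heq

lemma psi_tendstoUniformly :
    TendstoUniformly (fun n x => phiExt σ n x * zfun x)
      (fun x => σ x * zfun x) atTop := by
  rw [Metric.tendstoUniformly_iff]
  intro ε hε
  obtain ⟨N, hN⟩ := exists_nat_one_div_lt hε
  filter_upwards [eventually_ge_atTop (N+1)] with n hn
  intro x
  have hn1 : 1 ≤ n := le_trans (by omega) hn
  have hb := phiExt_sub_bound' hσ n hn1 x
  have hz1 := zfun_le_one x
  have hz0 := zfun_nonneg x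
  rw [Real.dist_eq]
  have e : σ x * zfun x - phiExt σ n x * zfun x = (σ x - phiExt σ n x) * zfun x := by ring
  rw [e, abs_mul, abs_of_nonneg hz0]
  have h1n : (1:ℝ)/(n:ℝ) ≤ 1/((N:ℝ)+1) := by
    apply one_div_le_one_div_of_le (by positivity)
    exact_mod_cast hn
  have habs : (0:ℝ) ≤ |σ x - phiExt σ n x| := abs_nonneg _
  calc |σ x - phiExt σ n x| * zfun x ≤ (1/(n:ℝ)) * 1 := by nlinarith
    _ = 1/(n:ℝ) := by ring
    _ ≤ 1/((N:ℝ)+1) := h1n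
    _ < ε := by exact_mod_cast hN

end SigmaLemmas3

/-- **Proposition 3.4.**  The function `b = σ·z` is odd and limit periodic; in
fact the functions `ψ_n = φ_n·z` are continuous, `2·3^n`-periodic and converge
uniformly to `b` on `ℝ`. -/
theorem b_odd_and_limit_periodic (σ : ℝ → ℝ) (hσ : SigmaSpec σ) :
    (∀ x : ℝ, σ (-x) * zfun (-x) = -(σ x * zfun x)) ∧
    LimitPeriodic (fun x => σ x * zfun x) ∧
    (∀ n : ℕ, Continuous (fun x => phiExt σ n x * zfun x)) ∧
    (∀ n : ℕ, Function.Periodic (fun x => phiExt σ n x * zfun x) (2 * 3 ^ n)) ∧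
    TendstoUniformly (fun n x => phiExt σ n x * zfun x)
      (fun x => σ x * zfun x) atTop := by
  have hunif := psi_tendstoUniformly hσ
  have hcont := fun n => psi_continuous hσ n
  have hbcont : Continuous (fun x => σ x * zfun x) :=
    hunif.continuous (Filter.Frequently.of_forall hcont)
  refine ⟨?_, ⟨hbcont, ⟨fun n x => phiExt σ n x * zfun x,
      fun n => ⟨hcont n, 2 * 3 ^ n, by positivity, psi_periodic σ n⟩, hunif⟩⟩,
    hcont, fun n => psi_periodic σ n, hunif⟩
  intro x
  by_cases hx : ∃ m : ℤ, x = (m : ℝ)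
  · obtain ⟨m, rfl⟩ := hx
    have h1 : zfun ((m:ℤ):ℝ) = 0 := zfun_int m
    have h2 : zfun (-((m:ℤ):ℝ)) = 0 := by rw [zfun_neg]; exact h1
    rw [h1, h2, mul_zero, mul_zero, neg_zero]
  · push_neg at hx
    obtain ⟨N, hl, hr⟩ := exists_pow_bound x
    rw [sigma_odd_aux hσ N x hl hr hx, zfun_neg]
    ring
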